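/- arXiv:0705.3084 — 8 statements merged into one kernel-verified Lean document; each statement's English description precedes it below -/
import Mathlib

section
/- There is no field k (of characteristic 0 or greater than 3) such that every cubic form over k in 3 or more variables is isotropic while there exists an anisotropic cubic form in 2 variables. Equivalently, if there exists an anisotropic binary cubic form over k, then there exists an anisotropic ternary cubic form over k. -/
open MvPolynomial

/-- A form (polynomial) is anisotropic if its only zero is the trivial one. -/
def Anisotropic {k : Type*} [CommSemiring k] {σ : Type*} (φ : MvPolynomial σ k) : Prop :=
  ∀ x : σ → k, eval x φ = 0 → x = 0

/-!
An anisotropic binary form `f` of degree `n` has `f(1, 0) ≠ 0`, so its dehomogenization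
`f(t, 1)` has degree `n`, and it has no root `a` since `f(a, 1) ≠ 0`. For `n = 3` it is therefore
irreducible and defines a cubic field extension `l / k`. The norm form of `l / k` in a basis is a
homogeneous cubic form in three variables, and it is anisotropic because in a field only `0` has
norm `0`.
-/

section NormForm

variable {R S ι : Type*} [CommRing R] [CommRing S] [Algebra R S] [Module.Free R S]
  [Module.Finite R S] [Fintype ι] [DecidableEq ι]

noncomputable def normForm (b : Module.Basis ι R S) : MvPolynomial ι R :=
  C ((-1) ^ Module.finrank R S) * ((Algebra.lmul R S).toLinearMap.polyCharpoly b).coeff 0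

theorem eval_normForm (b : Module.Basis ι R S) (x : S) :
    eval (b.repr x) (normForm b) = Algebra.norm R x := by
  rw [normForm, eval_mul, eval_C, LinearMap.polyCharpoly_coeff_eval, Algebra.norm_apply,
    LinearMap.det_eq_sign_charpoly_coeff]
  rfl

theorem isHomogeneous_normForm [Nontrivial R] (b : Module.Basis ι R S) :
    (normForm b).IsHomogeneous (Module.finrank R S) :=
  (LinearMap.polyCharpoly_coeff_isHomogeneous _ b 0 _ (zero_add _)).C_mul _

theorem anisotropic_normForm [IsDomain R] [IsDomain S] (b : Module.Basis ι R S) :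
    Anisotropic (normForm b) := by
  intro x hx
  rw [← b.equivFun.apply_symm_apply x, b.equivFun_apply, eval_normForm,
    Algebra.norm_eq_zero_iff] at hx
  rw [← b.equivFun.apply_symm_apply x, hx, map_zero]

end NormForm

section Dehomogenize

variable {R : Type*} [CommSemiring R] {f : MvPolynomial (Fin 2) R} {n : ℕ}

noncomputable def dehomogenize (f : MvPolynomial (Fin 2) R) : Polynomial R :=
  aeval ![Polynomial.X, 1] f

theorem MvPolynomial.IsHomogeneous.natDegree_dehomogenize_le (hf : f.IsHomogeneous n) :
    (dehomogenize f).natDegree ≤ n := by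
  simpa [dehomogenize] using f.aeval_natDegree_le hf.totalDegree_le ![Polynomial.X, 1] (n := 1)
    (fun i => by fin_cases i <;> simp [Polynomial.natDegree_X_le])

theorem MvPolynomial.IsHomogeneous.homogenize_dehomogenize (hf : f.IsHomogeneous n) :
    (dehomogenize f).homogenize n = f :=
  Polynomial.homogenize_eq_of_isHomogeneous hf rfl

theorem Anisotropic.natDegree_dehomogenize [Nontrivial R] (hf : f.IsHomogeneous n)
    (hfa : Anisotropic f) : (dehomogenize f).natDegree = n := by
  set F := dehomogenize f
  refine hf.natDegree_dehomogenize_le.antisymm (not_lt.mp fun (hlt : F.natDegree < n) => ?_)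
  have hfactor : f = X 1 ^ (n - F.natDegree) * F.homogenize F.natDegree := calc
    f = (1 * F).homogenize ((n - F.natDegree) + F.natDegree) := by
      rw [one_mul, Nat.sub_add_cancel hlt.le, hf.homogenize_dehomogenize]
    _ = X 1 ^ (n - F.natDegree) * F.homogenize F.natDegree := by
      rw [Polynomial.homogenize_mul _ _ (by simp) le_rfl, Polynomial.homogenize_one]
  have hzero : eval ![1, 0] f = 0 := by
    rw [hfactor, map_mul, map_pow, eval_X]
    simp [zero_pow (Nat.sub_ne_zero_of_lt hlt)]
  simpa using congrFun (hfa _ hzero) 0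

end Dehomogenize

section Field

variable {K : Type*} [Field K] {f : MvPolynomial (Fin 2) K} {n : ℕ}

theorem Anisotropic.eval_dehomogenize_ne_zero (hf : f.IsHomogeneous n) (hfa : Anisotropic f)
    (a : K) : (dehomogenize f).eval a ≠ 0 := by
  intro ha
  have hzero : eval ![a, 1] f = 0 := by
    rw [← hf.homogenize_dehomogenize,
      Polynomial.eval_homogenize hf.natDegree_dehomogenize_le] <;> simp [ha]
  simpa using congrFun (hfa _ hzero) 1

theorem Anisotropic.irreducible_dehomogenize (hf : f.IsHomogeneous n) (hfa : Anisotropic f)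
    (hn₂ : 2 ≤ n) (hn₃ : n ≤ 3) : Irreducible (dehomogenize f) := by
  have hdeg := hfa.natDegree_dehomogenize hf
  rw [Polynomial.irreducible_iff_roots_eq_zero_of_degree_le_three (hdeg ▸ hn₂) (hdeg ▸ hn₃),
    Multiset.eq_zero_iff_forall_notMem]
  exact fun a ha => hfa.eval_dehomogenize_ne_zero hf a (Polynomial.isRoot_of_mem_roots ha)

end Field

theorem stmt_2_general {k : Type*} [Field k]
    (f : MvPolynomial (Fin 2) k) (hf : f.IsHomogeneous 3) (hfa : Anisotropic f) :
    ∃ g : MvPolynomial (Fin 3) k, g.IsHomogeneous 3 ∧ Anisotropic g := by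
  have hirr := hfa.irreducible_dehomogenize hf (by norm_num) le_rfl
  have : Fact (Irreducible (dehomogenize f)) := ⟨hirr⟩
  let pb := AdjoinRoot.powerBasis hirr.ne_zero
  have : Module.Finite k (AdjoinRoot (dehomogenize f)) := pb.finite
  have hdeg : Module.finrank k (AdjoinRoot (dehomogenize f)) = 3 :=
    pb.finrank.trans (hfa.natDegree_dehomogenize hf)
  let b := Module.finBasisOfFinrankEq k (AdjoinRoot (dehomogenize f)) hdeg
  exact ⟨normForm b, by simpa only [hdeg] using isHomogeneous_normForm b, anisotropic_normForm b⟩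

theorem stmt_2 {k : Type*} [Field k]
    (hchar : ∀ p : ℕ, CharP k p → p = 0 ∨ 3 < p)
    (f : MvPolynomial (Fin 2) k) (hf : f.IsHomogeneous 3) (hfa : Anisotropic f) :
    ∃ g : MvPolynomial (Fin 3) k, g.IsHomogeneous 3 ∧ Anisotropic g :=
  stmt_2_general f hf hfa
end

section
/- For every prime p, every homogeneous form φ of degree d in d variables with integer coefficients that is anisotropic modulo p gives rise to an anisotropic form over ℚ: namely f = φ(x₁,...,x_d) + p·φ(x_{d+1},...,x_{2d}) + p²·φ(x_{2d+1},...,x_{3d}) + ... + p^{d-1}·φ(x_{(d-1)d+1},...,x_{d²}) is an anisotropic form of degree d in d² variables over ℚ. -/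
open MvPolynomial

/-- Evaluating a homogeneous polynomial at a scaled point. -/
lemma aux_eval_mul_point {σ R : Type*} [CommSemiring R] {φ : MvPolynomial σ R} {n : ℕ}
    (hφ : φ.IsHomogeneous n) (c : R) (x : σ → R) :
    eval (fun i => c * x i) φ = c ^ n * eval x φ := by
  rw [eval_eq, eval_eq, Finset.mul_sum]
  refine Finset.sum_congr rfl fun e he => ?_
  rw [mem_support_iff] at he
  have hdeg : (∑ i ∈ e.support, e i) = n := by
    have h := hφ he
    simpa [Finsupp.weight_apply, Finsupp.sum] using h
  have hprod : (∏ i ∈ e.support, (c * x i) ^ e i)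
      = c ^ n * ∏ i ∈ e.support, x i ^ e i := by
    rw [← hdeg, ← Finset.prod_pow_eq_pow_sum, ← Finset.prod_mul_distrib]
    exact Finset.prod_congr rfl fun i _ => mul_pow _ _ _
  rw [hprod]; ring

/-- Ring homomorphisms commute with evaluation. -/
lemma aux_eval_map_cast {σ R S : Type*} [CommSemiring R] [CommSemiring S] (f : R →+* S)
    (z : σ → R) (φ : MvPolynomial σ R) :
    eval (fun i => f (z i)) (map f φ) = f (eval z φ) := by
  rw [eval_map, ← eval₂_id (g := z) φ, eval₂_comp_left f (RingHom.id R) z φ,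
    RingHom.comp_id]
  rfl

theorem stmt_7 (p : ℕ) [Fact p.Prime] (d : ℕ) (hd : 0 < d)
    (φ : MvPolynomial (Fin d) ℤ) (hφ : φ.IsHomogeneous d)
    (hmod : Anisotropic (map (Int.castRingHom (ZMod p)) φ)) :
    Anisotropic (∑ j : Fin d, C ((p : ℚ) ^ (j : ℕ)) *
        rename (fun i => (j, i)) (map (Int.castRingHom ℚ) φ) :
      MvPolynomial (Fin d × Fin d) ℚ) := by
  have hp : p.Prime := Fact.out
  have hp0 : (p : ℤ) ≠ 0 := by exact_mod_cast hp.ne_zero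
  -- The integer version of the evaluation
  set S : (Fin d × Fin d → ℤ) → ℤ :=
    fun z => ∑ j : Fin d, (p : ℤ) ^ (j : ℕ) * eval (fun i => z (j, i)) φ with hS
  -- Step 1: if S z = 0, then p divides every coordinate of z.
  have divStep : ∀ z : Fin d × Fin d → ℤ, S z = 0 → ∀ t, (p : ℤ) ∣ z t := by
    intro z hz t
    have key : ∀ m : ℕ, ∀ j : Fin d, (j : ℕ) = m → ∀ i, (p : ℤ) ∣ z (j, i) := by
      intro m
      induction m using Nat.strong_induction_on with
      | _ m IH =>
        intro j hjm i
        -- p^(j+1) divides all other summands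
        have hsum : (p : ℤ) ^ ((j : ℕ) + 1) ∣
            (p : ℤ) ^ (j : ℕ) * eval (fun i => z (j, i)) φ := by
          have herase : (p : ℤ) ^ (j : ℕ) * eval (fun i => z (j, i)) φ =
              -∑ j' ∈ Finset.univ.erase j,
                (p : ℤ) ^ (j' : ℕ) * eval (fun i => z (j', i)) φ := by
            have hadd := Finset.add_sum_erase Finset.univ
              (fun j' : Fin d => (p : ℤ) ^ (j' : ℕ) * eval (fun i => z (j', i)) φ)
              (Finset.mem_univ j)
            have hz' : (∑ j' : Fin d,
                (p : ℤ) ^ (j' : ℕ) * eval (fun i => z (j', i)) φ) = 0 := hz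
            rw [hz'] at hadd
            linarith
          rw [herase, dvd_neg]
          refine Finset.dvd_sum fun j' hj' => ?_
          have hne : j' ≠ j := Finset.ne_of_mem_erase hj'
          rcases lt_or_gt_of_ne (fun h => hne (Fin.val_injective h) :
              (j' : ℕ) ≠ (j : ℕ)) with hlt | hgt
          · -- j' < j : use induction hypothesis, p divides z (j', ·), φ homogeneous
            have hdvd' : ∀ i, (p : ℤ) ∣ z (j', i) := IH (j' : ℕ) (hjm ▸ hlt) j' rfl
            have : (p : ℤ) ^ d ∣ eval (fun i => z (j', i)) φ := by
              set w : Fin d → ℤ := fun i => z (j', i) / p with hw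
              have hzw : (fun i => z (j', i)) = fun i => (p : ℤ) * w i := by
                funext i
                rw [hw]
                exact (Int.mul_ediv_cancel' (hdvd' i)).symm
              rw [hzw, aux_eval_mul_point hφ]
              exact Dvd.intro _ rfl
            refine dvd_mul_of_dvd_right (dvd_trans ?_ this) _
            exact pow_dvd_pow _ (by omega)
          · -- j' > j : p^(j'+1) has a higher power of p
            exact dvd_mul_of_dvd_left (pow_dvd_pow _ (by omega)) _
        -- cancel p^j : p divides eval at block j
        have hpe : (p : ℤ) ∣ eval (fun i => z (j, i)) φ := by
          rw [pow_succ] at hsum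
          exact (mul_dvd_mul_iff_left (pow_ne_zero _ hp0)).mp hsum
        -- apply anisotropy mod p
        have hcast : eval (fun i => ((z (j, i) : ℤ) : ZMod p))
            (map (Int.castRingHom (ZMod p)) φ) = 0 := by
          rw [show (fun i => ((z (j, i) : ℤ) : ZMod p)) =
              fun i => (Int.castRingHom (ZMod p)) (z (j, i)) from rfl,
            aux_eval_map_cast]
          simpa [ZMod.intCast_zmod_eq_zero_iff_dvd] using hpe
        have hzb := hmod _ hcast
        have : ((z (j, i) : ℤ) : ZMod p) = 0 := congrFun hzb i
        exact (ZMod.intCast_zmod_eq_zero_iff_dvd _ _).mp this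
    exact key (t.1 : ℕ) t.1 rfl t.2
  -- Step 2: descent — if S z = 0 then z = 0.
  have descent : ∀ n : ℕ, ∀ z : Fin d × Fin d → ℤ, S z = 0 → ∀ t, (z t).natAbs ≤ n → z t = 0 := by
    intro n
    induction n using Nat.strong_induction_on with
    | _ n IH =>
      intro z hz t hn
      by_cases h0 : z t = 0
      · exact h0
      · have hdvd := divStep z hz
        set w : Fin d × Fin d → ℤ := fun t => z t / p with hw
        have hzw : ∀ t, z t = (p : ℤ) * w t := fun t =>
          (Int.mul_ediv_cancel' (hdvd t)).symm
        have hSw : S w = 0 := by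
          have hcalc : S z = (p : ℤ) ^ d * S w := by
            rw [hS]
            simp only
            rw [Finset.mul_sum]
            refine Finset.sum_congr rfl fun j _ => ?_
            have : (fun i => z (j, i)) = fun i => (p : ℤ) * w (j, i) := by
              funext i; exact hzw (j, i)
            rw [this, aux_eval_mul_point hφ]
            ring
          have h0' : (p : ℤ) ^ d * S w = 0 := by rw [← hcalc]; exact hz
          rcases mul_eq_zero.mp h0' with h | h
          · exact absurd h (pow_ne_zero _ hp0)
          · exact h
        -- |w t| < |z t| ≤ n
        have hwne : w t ≠ 0 := by
          intro h
          exact h0 (by rw [hzw t, h, mul_zero])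
        have hlt : (w t).natAbs < (z t).natAbs := by
          rw [hzw t, Int.natAbs_mul]
          have h2 : 2 ≤ (p : ℤ).natAbs := by
            simpa using hp.two_le
          have := Int.natAbs_pos.mpr hwne
          calc (w t).natAbs < 2 * (w t).natAbs := by omega
            _ ≤ (p : ℤ).natAbs * (w t).natAbs := Nat.mul_le_mul_right _ h2
        have hwt := IH (w t).natAbs (lt_of_lt_of_le hlt hn) w hSw t le_rfl
        exact absurd hwt hwne
  -- Step 3: main argument — clear denominators.
  intro x hx
  set f : MvPolynomial (Fin d × Fin d) ℚ :=
    ∑ j : Fin d, C ((p : ℚ) ^ (j : ℕ)) *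
      rename (fun i => (j, i)) (map (Int.castRingHom ℚ) φ) with hf
  have hfh : f.IsHomogeneous d := by
    refine MvPolynomial.IsHomogeneous.sum _ _ _ fun j _ => ?_
    exact ((hφ.map _).rename_isHomogeneous).C_mul _
  set N : ℕ := ∏ t : Fin d × Fin d, (x t).den with hN
  have hNden : ∀ t, (x t).den ∣ N := fun t =>
    Finset.dvd_prod_of_mem _ (Finset.mem_univ t)
  have hNpos : 0 < N := Finset.prod_pos fun t _ => (x t).pos
  have hNQ : (N : ℚ) ≠ 0 := by exact_mod_cast hNpos.ne'
  set z : Fin d × Fin d → ℤ := fun t => (x t).num * ((N / (x t).den : ℕ) : ℤ) with hzdef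
  have hzQ : ∀ t, ((z t : ℤ) : ℚ) = (N : ℚ) * x t := by
    intro t
    have hden0 : ((x t).den : ℚ) ≠ 0 := by exact_mod_cast (x t).pos.ne'
    have hc : ((N / (x t).den : ℕ) : ℚ) = (N : ℚ) / ((x t).den : ℚ) := by
      rw [Nat.cast_div (hNden t) hden0]
    simp only [hzdef]
    rw [Int.cast_mul, Int.cast_natCast, hc]
    have hx' : (N : ℚ) * x t = (N : ℚ) * (((x t).num : ℚ) / ((x t).den : ℚ)) := by
      rw [Rat.num_div_den]
    rw [hx']
    field_simp
  -- evaluate f at the integer point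
  have heval : eval (fun t => ((z t : ℤ) : ℚ)) f = ((S z : ℤ) : ℚ) := by
    rw [hf]
    rw [map_sum (eval fun t => ((z t : ℤ) : ℚ))]
    rw [hS]
    push_cast
    refine Finset.sum_congr rfl fun j _ => ?_
    rw [eval_mul, eval_C, eval_rename]
    congr 1
    have : ((fun t => ((z t : ℤ) : ℚ)) ∘ fun i => (j, i)) =
        fun i => (Int.castRingHom ℚ) (z (j, i)) := rfl
    rw [this, aux_eval_map_cast]
    rfl
  have hz0 : eval (fun t => ((z t : ℤ) : ℚ)) f = 0 := by
    have hfun : (fun t => ((z t : ℤ) : ℚ)) = fun t => (N : ℚ) * x t := by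
      funext t; exact hzQ t
    rw [hfun, aux_eval_mul_point hfh, hx, mul_zero]
  have hSz : S z = 0 := by
    have : ((S z : ℤ) : ℚ) = 0 := heval ▸ hz0
    exact_mod_cast this
  have hzzero : ∀ t, z t = 0 := fun t => descent (z t).natAbs z hSz t le_rfl
  funext t
  have : (N : ℚ) * x t = 0 := by
    rw [← hzQ t, hzzero t]; norm_num
  have := mul_eq_zero.mp this
  rcases this with h | h
  · exact absurd h hNQ
  · exact h
end

section
/- Let k be a field, φ an anisotropic form of degree d in n variables over k, and a ∈ k×. Then a is represented by φ over the rational function field k(t) if and only if a is represented by φ over k. In symbols: D(φ_{k(t)}) ∩ k× = D(φ). -/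
/-!
Clear denominators: if `φ(x) = a` over `k(t)`, write `x = f / g` with polynomials `f i` and
`g ≠ 0`, so that `φ(f) = a g^d` by homogeneity. If `e` is the largest degree of the `f i` and
`c i` the coefficient of `t^e` in `f i`, then the coefficient of `t^(d e)` in `φ(f)` is `φ(c)`,
and `φ(f)` has no higher terms. Anisotropy makes `φ(c)` nonzero unless all `f i` vanish, so
`φ(c)` is the leading coefficient `a · lc(g)^d` of `φ(f)`, and `φ(lc(g)⁻¹ c) = a`.
-/

open MvPolynomial

theorem Polynomial.coeff_prod_sum_of_natDegree_le {R ι : Type*} [CommSemiring R]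
    (s : Finset ι) (p : ι → Polynomial R) (b : ι → ℕ) (h : ∀ i ∈ s, (p i).natDegree ≤ b i) :
    (∏ i ∈ s, p i).coeff (∑ i ∈ s, b i) = ∏ i ∈ s, (p i).coeff (b i) := by
  induction s using Finset.cons_induction with
  | empty => simp
  | cons i s _ ih =>
    have hs : ∀ j ∈ s, (p j).natDegree ≤ b j := fun j hj => h j (Finset.mem_cons_of_mem hj)
    rw [Finset.prod_cons, Finset.sum_cons, Finset.prod_cons, ← ih hs,
      Polynomial.coeff_mul_add_eq_of_natDegree_le (h i (Finset.mem_cons_self _ _))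
        ((Polynomial.natDegree_prod_le _ _).trans (Finset.sum_le_sum hs))]

namespace MvPolynomial.IsHomogeneous

variable {R σ : Type*} [CommSemiring R] {φ : MvPolynomial σ R} {d : ℕ}

theorem eval_smul (hφ : φ.IsHomogeneous d) (c : R) (x : σ → R) :
    eval (c • x) φ = c ^ d * eval x φ := by
  rw [eval_eq, eval_eq, Finset.mul_sum]
  refine Finset.sum_congr rfl fun m hm => ?_
  simp_rw [Pi.smul_apply, smul_eq_mul, mul_pow, Finset.prod_mul_distrib,
    Finset.prod_pow_eq_pow_sum, ← hφ.degree_eq_sum_deg_support hm]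
  ring

variable {f : σ → Polynomial R} {e : ℕ}

theorem natDegree_eval_map_C_le (hφ : φ.IsHomogeneous d) (hf : ∀ i, (f i).natDegree ≤ e) :
    (eval f (map Polynomial.C φ)).natDegree ≤ d * e := by
  rw [eval_map, eval₂_eq]
  refine Polynomial.natDegree_sum_le_of_forall_le _ _ fun m hm => ?_
  refine (Polynomial.natDegree_C_mul_le _ _).trans <| (Polynomial.natDegree_prod_le _ _).trans ?_
  calc ∑ i ∈ m.support, (f i ^ m i).natDegree
      ≤ ∑ i ∈ m.support, m i * e :=
        Finset.sum_le_sum fun i _ => Polynomial.natDegree_pow_le_of_le _ (hf i)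
    _ = d * e := by rw [← Finset.sum_mul, ← hφ.degree_eq_sum_deg_support hm]

theorem coeff_eval_map_C_of_natDegree_le (hφ : φ.IsHomogeneous d)
    (hf : ∀ i, (f i).natDegree ≤ e) :
    (eval f (map Polynomial.C φ)).coeff (d * e) = eval (fun i => (f i).coeff e) φ := by
  rw [eval_map, eval₂_eq, eval_eq, Polynomial.finsetSum_coeff]
  refine Finset.sum_congr rfl fun m hm => ?_
  rw [Polynomial.coeff_C_mul, hφ.degree_eq_sum_deg_support hm, Finset.sum_mul,
    Polynomial.coeff_prod_sum_of_natDegree_le _ _ _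
      fun i _ => Polynomial.natDegree_pow_le_of_le _ (hf i)]
  simp_rw [Polynomial.coeff_pow_of_natDegree_le (hf _)]

end MvPolynomial.IsHomogeneous

theorem Polynomial.sup_natDegree_eq_zero_of_coeff_sup_eq_zero {ι R : Type*} [Semiring R]
    (s : Finset ι) (f : ι → Polynomial R)
    (h : ∀ i ∈ s, (f i).coeff (s.sup fun i => (f i).natDegree) = 0) :
    s.sup (fun i => (f i).natDegree) = 0 := by
  set e := s.sup fun i => (f i).natDegree
  by_contra he
  refine lt_irrefl e <| (Finset.sup_lt_iff (Nat.pos_of_ne_zero he)).mpr fun i hi =>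
    (Finset.le_sup (f := fun i => (f i).natDegree) hi).lt_of_ne fun hdeg => he ?_
  have hlead : (f i).leadingCoeff = 0 := by rw [Polynomial.leadingCoeff, hdeg, h i hi]
  rw [Polynomial.leadingCoeff_eq_zero.mp hlead, Polynomial.natDegree_zero] at hdeg
  exact hdeg.symm

theorem Anisotropic.exists_eval_eq_leadingCoeff {R σ : Type*} [CommSemiring R] [Fintype σ]
    {φ : MvPolynomial σ R} {d : ℕ} (han : Anisotropic φ) (hφ : φ.IsHomogeneous d)
    (f : σ → Polynomial R) :
    ∃ c : σ → R, eval c φ = (eval f (map Polynomial.C φ)).leadingCoeff := by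
  set e := Finset.univ.sup fun i => (f i).natDegree
  have hfe : ∀ i, (f i).natDegree ≤ e := fun i =>
    Finset.le_sup (f := fun i => (f i).natDegree) (Finset.mem_univ i)
  have hcoeff := hφ.coeff_eval_map_C_of_natDegree_le hfe
  refine ⟨fun i => (f i).coeff e, ?_⟩
  have hdeg : (eval f (map Polynomial.C φ)).natDegree = d * e := by
    rcases eq_or_ne (eval (fun i => (f i).coeff e) φ) 0 with h | h
    · have he : e = 0 := Polynomial.sup_natDegree_eq_zero_of_coeff_sup_eq_zero _ f
        fun i _ => congr_fun (han _ h) i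
      simpa [he] using hφ.natDegree_eval_map_C_le hfe
    · exact (hφ.natDegree_eval_map_C_le hfe).antisymm
        (Polynomial.le_natDegree_of_ne_zero (hcoeff ▸ h))
  rw [Polynomial.leadingCoeff, hdeg, hcoeff]

theorem stmt_9_general {k : Type*} [Field k] {n d : ℕ} (φ : MvPolynomial (Fin n) k)
    (hφ : φ.IsHomogeneous d) (han : Anisotropic φ) (a : k) :
    (∃ x : Fin n → RatFunc k, eval x (map (RatFunc.C : k →+* RatFunc k) φ) = RatFunc.C a) ↔
      ∃ x : Fin n → k, eval x φ = a := by
  constructor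
  · rintro ⟨x, hx⟩
    obtain ⟨⟨g, hg⟩, hgx⟩ :=
      IsLocalization.exist_integer_multiples_of_finite (nonZeroDivisors (Polynomial k)) x
    choose f hf using hgx
    have hF : eval f (map Polynomial.C φ) = g ^ d * Polynomial.C a := by
      apply IsFractionRing.injective (Polynomial k) (RatFunc k)
      rw [map_eval, map_map, RatFunc.algebraMap_comp_C, map_mul, map_pow, RatFunc.algebraMap_C,
        ← hx, ← (hφ.map _).eval_smul]
      congr 2 with i
      simp [hf, Algebra.smul_def]
    obtain ⟨c, hc⟩ := han.exists_eval_eq_leadingCoeff hφ f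
    have hg0 : g.leadingCoeff ≠ 0 :=
      Polynomial.leadingCoeff_ne_zero.mpr (nonZeroDivisors.ne_zero hg)
    refine ⟨g.leadingCoeff⁻¹ • c, ?_⟩
    rw [hφ.eval_smul, hc, hF, Polynomial.leadingCoeff_mul, Polynomial.leadingCoeff_pow,
      Polynomial.leadingCoeff_C, inv_pow, inv_mul_cancel_left₀ (pow_ne_zero _ hg0)]
  · rintro ⟨x, rfl⟩
    exact ⟨RatFunc.C ∘ x, (map_eval _ _ _).symm⟩

theorem stmt_9 {k : Type*} [Field k] {n d : ℕ} (φ : MvPolynomial (Fin n) k)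
    (hφ : φ.IsHomogeneous d) (han : Anisotropic φ) (a : k) (ha : a ≠ 0) :
    (∃ x : Fin n → RatFunc k, eval x (map (RatFunc.C : k →+* RatFunc k) φ) = RatFunc.C a) ↔
      ∃ x : Fin n → k, eval x φ = a :=
  stmt_9_general φ hφ han a
end

section
/- Let k be a field, d ≥ 1, and φ a form of degree d in n variables over k. Over the rational function field K = k(t), the form ⟨1,t,t²,...,t^{d-1}⟩ ⊗ φ = φ(X₀) + t·φ(X₁) + t²·φ(X₂) + ... + t^{d-1}·φ(X_{d-1}) in dn variables is anisotropic over K if and only if φ is anisotropic over k. -/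
open MvPolynomial

/-!
Clearing denominators, it suffices to show that a zero `y` of `∑ tʲ φ(Xⱼ)` with coordinates in
`k[t]` vanishes. Setting `t = 0` gives `φ(y₀(0)) = 0`, so `t ∣ y₀`. Writing `y₀ = t w`, homogeneity
gives `φ(y₀) = t^d φ(w)`, so the form at `y` is `t` times the form at the cyclic shift
`(y₁, …, y_{d-1}, w)`, which is again a zero. Iterating, `t` divides every block, so `y = t y'`
with `y'` again a zero, and by induction `t^N ∣ y` for every `N`, forcing `y = 0`.
-/

namespace MvPolynomial

variable {R σ : Type*} [CommSemiring R] {φ : MvPolynomial σ R} {m : ℕ}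

theorem IsHomogeneous.eval_smul_s10 (hφ : φ.IsHomogeneous m) (c : R) (x : σ → R) :
    eval (c • x) φ = c ^ m * eval x φ := by
  rw [eval_eq, eval_eq, Finset.mul_sum]
  refine Finset.sum_congr rfl fun s hs => ?_
  simp only [Pi.smul_apply, smul_eq_mul, mul_pow, Finset.prod_mul_distrib,
    Finset.prod_pow_eq_pow_sum, ← hφ.degree_eq_sum_deg_support hs]
  ring

theorem IsHomogeneous.constantCoeff_eq_zero (hφ : φ.IsHomogeneous m) (hm : m ≠ 0) :
    constantCoeff φ = 0 := by
  rw [constantCoeff_eq]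
  exact hφ.coeff_eq_zero (by simpa using hm.symm)

end MvPolynomial

section Anisotropic

variable {σ : Type*}

theorem Anisotropic.of_map {R S : Type*} [CommSemiring R] [CommSemiring S] {φ : MvPolynomial σ R}
    {f : R →+* S} (hf : Function.Injective f) (h : Anisotropic (map f φ)) : Anisotropic φ := by
  intro x hx
  have : f ∘ x = 0 := h _ (by rw [eval_map, ← eval₂_comp, hx, map_zero])
  funext i
  exact hf (by simpa using congrFun this i)

theorem Anisotropic.map_algebraMap {A K : Type*} [CommRing A] [IsDomain A] [Field K] [Algebra A K]
    [IsFractionRing A K] [Finite σ] {φ : MvPolynomial σ A} {m : ℕ} (hφ : φ.IsHomogeneous m)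
    (h : Anisotropic φ) : Anisotropic (map (algebraMap A K) φ) := by
  intro y hy
  obtain ⟨b, hb⟩ := IsLocalization.exist_integer_multiples_of_finite (nonZeroDivisors A) y
  choose x hx using hb
  have hb0 : algebraMap A K b ≠ 0 :=
    IsFractionRing.to_map_ne_zero_of_mem_nonZeroDivisors b.2
  have hxy : algebraMap A K ∘ x = algebraMap A K b • y := funext fun i => by
    simp [hx i, Algebra.smul_def]
  have hx0 : x = 0 := h x <| IsFractionRing.injective A K <| by
    rw [eval₂_comp, ← eval_map, hxy, (hφ.map _).eval_smul_s10, hy, mul_zero, map_zero]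
  funext i
  have := hx i
  rw [hx0, Pi.zero_apply, map_zero, Algebra.smul_def] at this
  exact (mul_eq_zero.mp this.symm).resolve_left hb0

end Anisotropic

section SpringerForm

variable {R σ : Type*} [CommSemiring R]

noncomputable def springerForm (φ : MvPolynomial σ R) (d : ℕ) (t : R) :
    MvPolynomial (Fin d × σ) R :=
  ∑ j : Fin d, C (t ^ (j : ℕ)) * rename (fun i => (j, i)) φ

variable {φ : MvPolynomial σ R} {d : ℕ} {t : R}

theorem eval_uncurry_springerForm (z : Fin d → σ → R) :
    eval (Function.uncurry z) (springerForm φ d t) = ∑ j : Fin d, t ^ (j : ℕ) * eval (z j) φ := by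
  simp only [springerForm, map_sum, eval_mul, eval_C, eval_rename]
  rfl

theorem map_springerForm {S : Type*} [CommSemiring S] (f : R →+* S) :
    map f (springerForm φ d t) = springerForm (map f φ) d (f t) := by
  simp only [springerForm, map_sum, _root_.map_mul, map_C, map_pow, map_rename]

theorem MvPolynomial.IsHomogeneous.springerForm {m : ℕ} (hφ : φ.IsHomogeneous m) :
    (springerForm φ d t).IsHomogeneous m :=
  IsHomogeneous.sum _ _ _ fun _ _ => (hφ.rename_isHomogeneous).C_mul _

theorem eval_springerForm_zero {e : ℕ} (y : Fin (e + 1) × σ → R) :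
    eval y (springerForm φ (e + 1) 0) = eval (fun i => y (0, i)) φ := by
  rw [← Function.uncurry_curry y, eval_uncurry_springerForm, Fin.sum_univ_succ]
  simp only [Fin.val_zero, pow_zero, one_mul, Fin.val_succ, pow_succ, mul_zero, zero_mul,
    Finset.sum_const_zero, add_zero]
  rfl

theorem Anisotropic.of_springerForm [NeZero d] (hφ : constantCoeff φ = 0)
    (h : Anisotropic (springerForm φ d t)) : Anisotropic φ := by
  classical
  intro x hx
  have hy := h (Function.uncurry fun j => if j = 0 then x else 0) <| by
    rw [eval_uncurry_springerForm]
    refine Finset.sum_eq_zero fun j _ => ?_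
    split_ifs
    · rw [hx, mul_zero]
    · rw [eval_zero, hφ, mul_zero]
  funext i
  simpa using congrFun hy (0, i)

theorem eval_uncurry_springerForm_snoc {e : ℕ} (hφ : φ.IsHomogeneous (e + 1))
    (z : Fin (e + 1) → σ → R) (w : σ → R) (hw : z 0 = t • w) :
    eval (Function.uncurry z) (springerForm φ (e + 1) t) =
      t * eval (Function.uncurry (Fin.snoc (α := fun _ => σ → R) (Fin.tail z) w))
        (springerForm φ (e + 1) t) := by
  rw [eval_uncurry_springerForm, eval_uncurry_springerForm, Fin.sum_univ_succ,
    Fin.sum_univ_castSucc, hw, hφ.eval_smul_s10, mul_add, Finset.mul_sum, add_comm]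
  simp only [Fin.snoc_castSucc, Fin.snoc_last, Fin.tail, Fin.val_succ, Fin.val_last,
    Fin.val_castSucc, Fin.val_zero, pow_succ]
  congr 1
  · exact Finset.sum_congr rfl fun _ _ => by ring
  · ring

end SpringerForm

section PolynomialCoefficients

open scoped Polynomial

variable {k σ : Type*} [Field k] {φ : MvPolynomial σ k} {e : ℕ}

theorem X_dvd_apply_zero_of_eval_springerForm_eq_zero (hani : Anisotropic φ)
    {y : Fin (e + 1) × σ → k[X]}
    (hy : eval y (springerForm (map Polynomial.C φ) (e + 1) Polynomial.X) = 0) (i : σ) :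
    Polynomial.X ∣ y (0, i) := by
  have h := congrArg (Polynomial.evalRingHom 0) hy
  have hC : (Polynomial.evalRingHom 0).comp Polynomial.C = RingHom.id k :=
    RingHom.ext fun _ => Polynomial.eval_C
  rw [map_zero, eval₂_comp, ← eval_map, map_springerForm, map_map, hC, map_id,
    Polynomial.coe_evalRingHom, Polynomial.eval_X, eval_springerForm_zero] at h
  rw [Polynomial.X_dvd_iff, Polynomial.coeff_zero_eq_eval_zero]
  simpa using congrFun (hani _ h) i

theorem X_dvd_of_eval_springerForm_eq_zero (hφ : φ.IsHomogeneous (e + 1))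
    (hani : Anisotropic φ) (j : Fin (e + 1)) :
    ∀ y : Fin (e + 1) × σ → k[X],
      eval y (springerForm (map Polynomial.C φ) (e + 1) Polynomial.X) = 0 →
        ∀ i, Polynomial.X ∣ y (j, i) := by
  induction j using Fin.induction with
  | zero => exact fun y hy => X_dvd_apply_zero_of_eval_springerForm_eq_zero hani hy
  | succ j ih =>
    intro y hy i
    choose w hw using X_dvd_apply_zero_of_eval_springerForm_eq_zero hani hy
    have hrot := eval_uncurry_springerForm_snoc (hφ.map Polynomial.C) (Function.curry y) w
      (funext hw)
    rw [Function.uncurry_curry, hy, eq_comm, mul_eq_zero] at hrot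
    simpa [Fin.tail] using ih _ (hrot.resolve_left Polynomial.X_ne_zero) i

theorem X_pow_dvd_of_eval_springerForm_eq_zero (hφ : φ.IsHomogeneous (e + 1))
    (hani : Anisotropic φ) (N : ℕ) :
    ∀ y : Fin (e + 1) × σ → k[X],
      eval y (springerForm (map Polynomial.C φ) (e + 1) Polynomial.X) = 0 →
        ∀ v, Polynomial.X ^ N ∣ y v := by
  induction N with
  | zero => simp
  | succ N ih =>
    intro y hy
    choose w hw using fun v : Fin (e + 1) × σ =>
      X_dvd_of_eval_springerForm_eq_zero hφ hani v.1 y hy v.2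
    have hyw : y = (Polynomial.X : k[X]) • w := _root_.funext hw
    rw [hyw, ((hφ.map Polynomial.C).springerForm).eval_smul_s10, mul_eq_zero] at hy
    intro v
    rw [hyw, pow_succ', Pi.smul_apply, smul_eq_mul]
    exact mul_dvd_mul_left _ (ih w (hy.resolve_left (pow_ne_zero _ Polynomial.X_ne_zero)) v)

theorem anisotropic_springerForm_X (hφ : φ.IsHomogeneous (e + 1)) (hani : Anisotropic φ) :
    Anisotropic (springerForm (map Polynomial.C φ) (e + 1) Polynomial.X) :=
  fun y hy => funext fun v => Polynomial.eq_zero_of_dvd_of_natDegree_lt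
    (X_pow_dvd_of_eval_springerForm_eq_zero hφ hani ((y v).natDegree + 1) y hy v)
    (by rw [Polynomial.natDegree_X_pow]; omega)

end PolynomialCoefficients

theorem stmt_10 {k : Type*} [Field k] {n d : ℕ} (hd : 1 ≤ d)
    (φ : MvPolynomial (Fin n) k) (hφ : φ.IsHomogeneous d) :
    Anisotropic (∑ j : Fin d, C (RatFunc.X ^ (j : ℕ)) *
        rename (fun i => (j, i)) (map (RatFunc.C : k →+* RatFunc k) φ) :
      MvPolynomial (Fin d × Fin n) (RatFunc k)) ↔ Anisotropic φ := by
  obtain ⟨e, rfl⟩ : ∃ e, d = e + 1 := ⟨d - 1, by omega⟩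
  have hΦ : springerForm (map RatFunc.C φ) (e + 1) RatFunc.X =
      map (algebraMap (Polynomial k) (RatFunc k))
        (springerForm (map Polynomial.C φ) (e + 1) Polynomial.X) := by
    rw [map_springerForm, map_map, RatFunc.algebraMap_comp_C, RatFunc.algebraMap_X]
  change Anisotropic (springerForm _ _ _) ↔ _
  rw [hΦ]
  constructor
  · exact fun h => ((h.of_map (IsFractionRing.injective _ _)).of_springerForm
      ((hφ.map _).constantCoeff_eq_zero e.succ_ne_zero)).of_map Polynomial.C_injective
  · exact fun h => (anisotropic_springerForm_X hφ h).map_algebraMap (hφ.map _).springerForm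
end

section
/- Let k be a field and K = k(t) the rational function field in one variable. Then the d-th level satisfies s_d(k) = s_d(k(t)), where s_d(F) is the least s such that -1 is a sum of s d-th powers in F (or ∞ if no such s exists). -/
/-!
Over any field, `-1` is a sum of `s` `d`-th powers iff the diagonal form `x₀ ^ d + ⋯ + x_s ^ d`
has a nontrivial zero, so it suffices to descend nontrivial zeros from `k(t)` to `k`. Clearing
denominators gives a nontrivial zero `p` with polynomial entries; if `N` is the largest degree
among the `p i`, then comparing coefficients of `t ^ (d * N)` shows that the vector of
coefficients of `t ^ N` is a nontrivial zero over `k`.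
-/

open Polynomial

theorem exists_sum_pow_eq_neg_one_iff_exists_ne_zero {F : Type*} [Field F] {d s : ℕ} :
    (∃ a : Fin s → F, ∑ i, a i ^ d = -1) ↔
      ∃ b : Fin (s + 1) → F, b ≠ 0 ∧ ∑ i, b i ^ d = 0 := by
  constructor
  · rintro ⟨a, ha⟩
    refine ⟨Fin.cons 1 a, fun h => one_ne_zero (congrFun h 0), ?_⟩
    simp [Fin.sum_univ_succ, ha]
  · rintro ⟨b, hb, h⟩
    obtain ⟨j, hj⟩ := Function.ne_iff.mp hb
    refine ⟨fun i => b (j.succAbove i) / b j, ?_⟩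
    rw [Fin.sum_univ_succAbove _ j] at h
    simp only [div_pow, ← Finset.sum_div]
    rw [div_eq_iff (pow_ne_zero d hj)]
    linear_combination h

section

variable {ι : Type*} [Fintype ι]

theorem Polynomial.exists_ne_zero_sum_pow_eq_zero {R : Type*} [Semiring R] {d : ℕ}
    {p : ι → R[X]} (hp : p ≠ 0) (h : ∑ i, p i ^ d = 0) :
    ∃ c : ι → R, c ≠ 0 ∧ ∑ i, c i ^ d = 0 := by
  classical
  obtain ⟨j, hj⟩ := Function.ne_iff.mp hp
  obtain ⟨i, hi, hmax⟩ := (Finset.univ.filter (p · ≠ 0)).exists_max_image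
    (fun i => (p i).natDegree) ⟨j, by simpa using hj⟩
  have hle : ∀ j, (p j).natDegree ≤ (p i).natDegree := by
    intro j
    by_cases hj : p j = 0
    · simp [hj]
    · exact hmax j (by simpa using hj)
  refine ⟨fun j => (p j).coeff (p i).natDegree, Function.ne_iff.mpr ⟨i, ?_⟩, ?_⟩
  · simpa using (Finset.mem_filter.mp hi).2
  · have h_coeff := congrArg (coeff · (d * (p i).natDegree)) h
    simp only [finsetSum_coeff, coeff_pow_of_natDegree_le (hle _), coeff_zero] at h_coeff
    exact h_coeff

theorem IsFractionRing.exists_ne_zero_sum_pow_eq_zero {R K : Type*} [CommRing R] [Field K]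
    [Algebra R K] [IsFractionRing R K] {d : ℕ} {b : ι → K} (hb : b ≠ 0)
    (h : ∑ i, b i ^ d = 0) : ∃ p : ι → R, p ≠ 0 ∧ ∑ i, p i ^ d = 0 := by
  obtain ⟨q, hq⟩ := IsLocalization.exist_integer_multiples_of_finite (nonZeroDivisors R) b
  choose p hp using hq
  have hq0 : algebraMap R K q ≠ 0 := (IsLocalization.map_units K q).ne_zero
  refine ⟨p, ?_, IsFractionRing.injective R K ?_⟩
  · contrapose! hb
    ext i
    simpa [hb, Algebra.smul_def, hq0, eq_comm] using hp i
  · simp [hp, Algebra.smul_def, mul_pow, ← Finset.mul_sum, h]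

theorem RatFunc.exists_ne_zero_sum_pow_eq_zero_iff {k : Type*} [Field k] {d : ℕ} :
    (∃ b : ι → RatFunc k, b ≠ 0 ∧ ∑ i, b i ^ d = 0) ↔
      ∃ c : ι → k, c ≠ 0 ∧ ∑ i, c i ^ d = 0 := by
  constructor
  · rintro ⟨b, hb, h⟩
    obtain ⟨p, hp, hp_sum⟩ := IsFractionRing.exists_ne_zero_sum_pow_eq_zero (R := k[X]) hb h
    exact Polynomial.exists_ne_zero_sum_pow_eq_zero hp hp_sum
  · rintro ⟨c, hc, h⟩
    refine ⟨algebraMap k (RatFunc k) ∘ c, ?_, ?_⟩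
    · exact fun h0 => hc (funext fun i => (algebraMap k (RatFunc k)).injective
        (by simpa using congrFun h0 i))
    · simp [← map_pow, ← map_sum, h]

end

theorem stmt_12_general {k : Type*} [Field k] (d : ℕ) :
    sInf {s : ℕ | 0 < s ∧ ∃ a : Fin s → k, ∑ i, a i ^ d = -1} =
      sInf {s : ℕ | 0 < s ∧ ∃ a : Fin s → RatFunc k, ∑ i, a i ^ d = -1} := by
  simp_rw [exists_sum_pow_eq_neg_one_iff_exists_ne_zero, RatFunc.exists_ne_zero_sum_pow_eq_zero_iff]

theorem stmt_12 {k : Type*} [Field k] (d : ℕ) (hd : 0 < d) :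
    sInf {s : ℕ | 0 < s ∧ ∃ a : Fin s → k, ∑ i, a i ^ d = -1} =
      sInf {s : ℕ | 0 < s ∧ ∃ a : Fin s → RatFunc k, ∑ i, a i ^ d = -1} :=
  stmt_12_general d
end

section
/- Let k be a field with finite d-th level s_d(k) < ∞ and suppose the quotient group k×/(k×)^d is finite of order N. Then every anisotropic diagonal form ⟨a₁,...,a_m⟩ of degree d over k satisfies m ≤ N. In other words, u_diag(d,k) ≤ |k×/(k×)^d|. -/
/-! Let `D(φ) ⊆ k` be the set of values `φ(x)`, `x ≠ 0`, of an anisotropic diagonal form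
`φ = ⟨a₁, …, a_m⟩`. It avoids `0` and is stable under multiplication by nonzero `d`-th powers,
so it is a union of classes of `kˣ/kˣ^d`. For `φ_j = ⟨a₁, …, a_j⟩` these class sets strictly
increase with `j`: if `D(φ_{j+1}) ⊆ D(φ_j)`, then `a_{j+1} ∈ D(φ_j)` and `D(φ_j)` is closed under
adding `a_{j+1} t^d`, so writing `-1 = ∑ bᵢ^d` gives `a_{j+1} (1 + ∑ bᵢ^d) = 0 ∈ D(φ_j)`,
contradicting anisotropy. Hence `m ≤ |kˣ/kˣ^d|`. -/

section DiagonalForm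

open Finset

variable {k : Type*} [Field k] (d : ℕ)

def diagForm {ι : Type*} [Fintype ι] (a x : ι → k) : k := ∑ i, a i * x i ^ d

def IsAnisotropicDiag {ι : Type*} [Fintype ι] (a : ι → k) : Prop :=
  ∀ x, diagForm d a x = 0 → x = 0

def diagValues {ι : Type*} [Fintype ι] (a : ι → k) : Set k := diagForm d a '' {0}ᶜ

variable {d}

section Fintype

variable {ι : Type*} [Fintype ι] {a : ι → k}

theorem diagForm_zero (hd : d ≠ 0) : diagForm d a 0 = 0 := by
  simp [diagForm, zero_pow hd]

theorem zero_notMem_diagValues (h : IsAnisotropicDiag d a) : 0 ∉ diagValues d a :=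
  fun ⟨x, hx, hx0⟩ => hx (h x hx0)

theorem diagForm_smul (x : ι → k) (c : k) :
    diagForm d a (c • x) = c ^ d * diagForm d a x := by
  simp only [diagForm, mul_sum, Pi.smul_apply, smul_eq_mul, mul_pow]
  exact sum_congr rfl fun _ _ => by ring

theorem pow_mul_mem_diagValues {v c : k} (hc : c ≠ 0) (hv : v ∈ diagValues d a) :
    c ^ d * v ∈ diagValues d a := by
  obtain ⟨x, hx, rfl⟩ := hv
  exact ⟨c • x, smul_ne_zero hc hx, diagForm_smul x c⟩

end Fintype

section Snoc

variable {m : ℕ} {a : Fin (m + 1) → k}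

theorem diagForm_snoc (x : Fin m → k) (t : k) :
    diagForm d a (Fin.snoc x t) = diagForm d (Fin.init a) x + a (Fin.last m) * t ^ d := by
  simp [diagForm, Fin.sum_univ_castSucc, Fin.init]

theorem snoc_ne_zero {x : Fin m → k} {t : k} (h : x ≠ 0 ∨ t ≠ 0) :
    (Fin.snoc x t : Fin (m + 1) → k) ≠ 0 := by
  intro h0
  have : (Fin.snoc x t : Fin (m + 1) → k) = Fin.snoc 0 0 := by
    rw [h0]; funext i; refine Fin.lastCases ?_ (fun j => ?_) i <;> simp
  obtain ⟨rfl, rfl⟩ := Fin.snoc_injective2 this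
  simp at h

theorem add_mul_pow_mem_diagValues {v : k} (hv : v ∈ diagValues d (Fin.init a)) (t : k) :
    v + a (Fin.last m) * t ^ d ∈ diagValues d a := by
  obtain ⟨x, hx, rfl⟩ := hv
  exact ⟨Fin.snoc x t, snoc_ne_zero (.inl hx), diagForm_snoc x t⟩

theorem diagValues_init_subset (hd : d ≠ 0) : diagValues d (Fin.init a) ⊆ diagValues d a :=
  fun v hv => by simpa [zero_pow hd] using add_mul_pow_mem_diagValues hv 0

theorem last_mem_diagValues (hd : d ≠ 0) : a (Fin.last m) ∈ diagValues d a :=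
  ⟨Fin.snoc 0 1, snoc_ne_zero (.inr one_ne_zero), by simp [diagForm_snoc, diagForm_zero hd]⟩

theorem IsAnisotropicDiag.init (hd : d ≠ 0) (h : IsAnisotropicDiag d a) :
    IsAnisotropicDiag d (Fin.init a) := by
  intro x hx
  by_contra hx0
  exact zero_notMem_diagValues h (diagValues_init_subset hd ⟨x, hx0, hx⟩)

theorem not_diagValues_subset_init (hd : d ≠ 0) (h : IsAnisotropicDiag d a)
    {s : ℕ} {b : Fin s → k} (hb : ∑ i, b i ^ d = -1) :
    ¬ diagValues d a ⊆ diagValues d (Fin.init a) := by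
  intro hsub
  have key : ∀ t : Finset (Fin s),
      a (Fin.last m) * (1 + ∑ i ∈ t, b i ^ d) ∈ diagValues d (Fin.init a) := by
    intro t
    induction t using Finset.induction_on with
    | empty => simpa using hsub (last_mem_diagValues hd)
    | insert j t hj ih =>
      rw [sum_insert hj, show ∀ u v : k, a (Fin.last m) * (1 + (u + v)) =
        a (Fin.last m) * (1 + v) + a (Fin.last m) * u from fun _ _ => by ring]
      exact hsub (add_mul_pow_mem_diagValues ih (b j))
  have := key univ
  rw [hb, add_neg_cancel, mul_zero] at this
  exact zero_notMem_diagValues (h.init hd) this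

end Snoc

def diagClasses (d : ℕ) {ι : Type*} [Fintype ι] (a : ι → k) :
    Set (kˣ ⧸ (powMonoidHom d : kˣ →* kˣ).range) :=
  QuotientGroup.mk '' (Units.val ⁻¹' diagValues d a)

theorem diagClasses_mono {ι ι' : Type*} [Fintype ι] [Fintype ι'] {a : ι → k} {b : ι' → k}
    (h : diagValues d a ⊆ diagValues d b) : diagClasses d a ⊆ diagClasses d b :=
  Set.image_mono (Set.preimage_mono h)

theorem diagValues_subset_of_diagClasses_subset {ι ι' : Type*} [Fintype ι] [Fintype ι']
    {a : ι → k} {b : ι' → k} (ha : 0 ∉ diagValues d a) (h : diagClasses d a ⊆ diagClasses d b) :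
    diagValues d a ⊆ diagValues d b := by
  intro v hv
  have hv0 : v ≠ 0 := fun h0 => ha (h0 ▸ hv)
  obtain ⟨u, hu, hclass⟩ := h ⟨Units.mk0 v hv0, hv, rfl⟩
  obtain ⟨c, hc⟩ := QuotientGroup.eq.mp hclass
  have hvu : v = (c : k) ^ d * u := by
    have := congrArg Units.val (inv_mul_eq_iff_eq_mul.mp hc.symm)
    simp only [powMonoidHom_apply, Units.val_mul, Units.val_pow_eq_pow_val, Units.val_mk0] at this
    rw [this, mul_comm]
  exact hvu ▸ pow_mul_mem_diagValues c.ne_zero hu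

theorem le_ncard_diagClasses [Finite (kˣ ⧸ (powMonoidHom d : kˣ →* kˣ).range)] (hd : d ≠ 0)
    {s : ℕ} {b : Fin s → k} (hb : ∑ i, b i ^ d = -1) :
    ∀ {m : ℕ} {a : Fin m → k}, IsAnisotropicDiag d a → m ≤ (diagClasses d a).ncard
  | 0, _, _ => Nat.zero_le _
  | m + 1, a, h => by
    have hlt : diagClasses d (Fin.init a) ⊂ diagClasses d a :=
      ⟨diagClasses_mono (diagValues_init_subset hd), fun hsup =>
        not_diagValues_subset_init hd h hb
          (diagValues_subset_of_diagClasses_subset (zero_notMem_diagValues h) hsup)⟩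
    exact (le_ncard_diagClasses hd hb (h.init hd)).trans_lt (Set.ncard_lt_ncard hlt)

end DiagonalForm

theorem stmt_13_general {k : Type*} [Field k] (d : ℕ) (hd : 0 < d)
    (hlevel : ∃ s : ℕ, 0 < s ∧ ∃ a : Fin s → k, ∑ i, a i ^ d = -1)
    (N : ℕ) [Finite (kˣ ⧸ (powMonoidHom d : kˣ →* kˣ).range)]
    (hN : Nat.card (kˣ ⧸ (powMonoidHom d : kˣ →* kˣ).range) = N)
    (m : ℕ) (a : Fin m → k)
    (haniso : ∀ x : Fin m → k, ∑ i, a i * x i ^ d = 0 → x = 0) :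
    m ≤ N := by
  obtain ⟨s, -, b, hb⟩ := hlevel
  calc m ≤ (diagClasses d a).ncard := le_ncard_diagClasses hd.ne' hb haniso
    _ ≤ N := hN ▸ Set.ncard_le_card _

theorem stmt_13 {k : Type*} [Field k] (d : ℕ) (hd : 0 < d)
    (hlevel : ∃ s : ℕ, 0 < s ∧ ∃ a : Fin s → k, ∑ i, a i ^ d = -1)
    (N : ℕ) [Finite (kˣ ⧸ (powMonoidHom d : kˣ →* kˣ).range)]
    (hN : Nat.card (kˣ ⧸ (powMonoidHom d : kˣ →* kˣ).range) = N)
    (m : ℕ) (a : Fin m → k) (ha : ∀ i, a i ≠ 0)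
    (haniso : ∀ x : Fin m → k, ∑ i, a i * x i ^ d = 0 → x = 0) :
    m ≤ N :=
  stmt_13_general d hd hlevel N hN m a haniso
end

section
/- Let R be a complete discrete valuation ring with algebraically closed residue field k̄ and field of fractions k, and suppose char k̄ does not divide d. Then u_diag(d,k) = d: every diagonal form of degree d over k in more than d variables is isotropic, and there exists an anisotropic diagonal degree-d form of dimension d over k (namely ⟨1, π, π², ..., π^{d-1}⟩ for a uniformizer π). -/
/-!
Clearing denominators reduces everything to `R`, where a nonzero element is `u * π ^ n` with `u` a
unit. Among more than `d` coefficients two exponents agree mod `d`, say `n` and `n + d * e`; as `d`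
is invertible in the algebraically closed residue field, Hensel's lemma extracts a `d`-th root `w`
of the unit `-v / u`, and `w * π ^ e` makes the binary form `u π ^ n X ^ d + v π ^ (n + d e)`
isotropic. For `⟨1, π, …, π ^ (d - 1)⟩` the exponents `i + d * v(y i)` are distinct, so no
cancellation is possible: concretely, every `y i` is divisible by `π`, `y / π` is again a zero, and
by Krull's intersection theorem `y = 0`.
-/

open IsLocalRing Polynomial

theorem exists_pow_eq_of_isUnit {R : Type*} [CommRing R] [IsLocalRing R]
    [HenselianRing R (maximalIdeal R)] [IsAlgClosed (ResidueField R)] {d : ℕ}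
    (hd : (d : ResidueField R) ≠ 0) {c : R} (hc : IsUnit c) : ∃ w : R, w ^ d = c := by
  have hd0 : d ≠ 0 := by rintro rfl; simp at hd
  obtain ⟨r, hr⟩ := IsAlgClosed.exists_pow_nat_eq (residue R c) (Nat.pos_of_ne_zero hd0)
  have hr0 : r ≠ 0 := by
    rintro rfl
    exact (residue_ne_zero_iff_isUnit c).mpr hc (by rw [← hr, zero_pow hd0])
  obtain ⟨a₀, rfl⟩ := residue_surjective r
  have h_root : (X ^ d - C c).eval a₀ ∈ maximalIdeal R := by
    rw [← residue_eq_zero_iff]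
    simp [hr]
  have h_simple : IsUnit (residue R ((X ^ d - C c).derivative.eval a₀)) := by
    simp only [derivative_sub, derivative_X_pow, derivative_C, sub_zero, eval_mul, eval_natCast,
      eval_pow, eval_X, map_mul, map_pow, map_natCast, isUnit_iff_ne_zero]
    exact mul_ne_zero hd (pow_ne_zero _ hr0)
  obtain ⟨w, hw, -⟩ :=
    HenselianRing.is_henselian _ (monic_X_pow_sub_C c hd0) a₀ h_root h_simple
  exact ⟨w, sub_eq_zero.mp (by simpa using hw)⟩

theorem exists_mul_pow_add_mul_pow_eq_zero {R : Type*} [CommRing R] [IsLocalRing R]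
    [HenselianRing R (maximalIdeal R)] [IsAlgClosed (ResidueField R)] {d : ℕ}
    (hd : (d : ResidueField R) ≠ 0) (u v : Rˣ) (π : R) (n e : ℕ) :
    ∃ z : R, u * π ^ n * z ^ d + v * π ^ (n + d * e) = 0 := by
  obtain ⟨w, hw⟩ := exists_pow_eq_of_isUnit hd (-(v * u⁻¹)).isUnit
  refine ⟨w * π ^ e, ?_⟩
  rw [mul_pow, hw, ← pow_mul, pow_add, Units.val_neg, Units.val_mul]
  linear_combination (-(v : R) * π ^ n * π ^ (d * e)) * u.mul_inv

theorem exists_mul_pow_add_eq_zero_of_lt_card {R : Type*} [CommRing R] [IsDomain R]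
    [IsDiscreteValuationRing R] [HenselianRing R (maximalIdeal R)]
    [IsAlgClosed (ResidueField R)] {d : ℕ} (hd : (d : ResidueField R) ≠ 0)
    {ι : Type*} [Fintype ι] (hcard : d < Fintype.card ι) {y : ι → R} (hy : ∀ i, y i ≠ 0) :
    ∃ i j, i ≠ j ∧ ∃ z : R, y i * z ^ d + y j = 0 := by
  have hd0 : 0 < d := Nat.pos_of_ne_zero (by rintro rfl; simp at hd)
  obtain ⟨π, hπ⟩ := IsDiscreteValuationRing.exists_irreducible R
  choose n u hu using fun i => IsDiscreteValuationRing.eq_unit_mul_pow_irreducible (hy i) hπ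
  obtain ⟨i, j, hij, hmod⟩ := Fintype.exists_ne_map_eq_of_card_lt
    (fun k => (⟨n k % d, Nat.mod_lt _ hd0⟩ : Fin d)) (by simpa using hcard)
  replace hmod : n i ≡ n j [MOD d] := Fin.mk.inj_iff.mp hmod
  wlog hle : n i ≤ n j generalizing i j
  · obtain ⟨i, j, hij, h⟩ := this j i hij.symm hmod.symm (le_of_not_ge hle)
    exact ⟨i, j, hij, h⟩
  obtain ⟨e, he⟩ := (Nat.modEq_iff_dvd' hle).mp hmod
  obtain ⟨z, hz⟩ := exists_mul_pow_add_mul_pow_eq_zero hd (u i) (u j) π (n i) e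
  rw [← he, Nat.add_sub_cancel' hle] at hz
  exact ⟨i, j, hij, z, by rwa [hu i, hu j]⟩

theorem exists_ne_zero_sum_mul_pow_eq_zero_of_mul_pow_add_eq_zero {K ι : Type*} [Semiring K] [Nontrivial K]
    [Fintype ι] [DecidableEq ι] {d : ℕ} (hd : d ≠ 0) {a : ι → K} {i j : ι} (hij : i ≠ j)
    {z : K} (hz : a i * z ^ d + a j = 0) :
    ∃ x : ι → K, x ≠ 0 ∧ ∑ k, a k * x k ^ d = 0 := by
  refine ⟨Function.update (Pi.single j 1) i z, fun h => ?_, ?_⟩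
  · simpa [hij.symm] using congrFun h j
  · rw [Fintype.sum_eq_add i j hij (fun k hk => by simp [hk.1, hk.2, hd])]
    simpa [hij.symm] using hz

theorem dvd_of_sum_pow_mul_pow_eq_zero {R : Type*} [CommRing R] [IsDomain R] {π : R}
    (hπ : Prime π) {d : ℕ} {y : Fin d → R} (hy : ∑ i : Fin d, π ^ (i : ℕ) * y i ^ d = 0)
    (i : Fin d) : π ∣ y i := by
  induction i using WellFoundedLT.induction with
  | ind i ih =>
    have h_rest : π ^ ((i : ℕ) + 1) ∣ ∑ j ∈ {i}ᶜ, π ^ (j : ℕ) * y j ^ d := by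
      refine Finset.dvd_sum fun j hj => ?_
      rcases lt_or_gt_of_ne (Finset.mem_compl.mp hj ∘ Finset.mem_singleton.mpr) with h | h
      · refine (pow_dvd_pow π (by omega : (i : ℕ) + 1 ≤ j + d)).trans ?_
        rw [pow_add]
        exact mul_dvd_mul_left _ (pow_dvd_pow_of_dvd (ih j h) d)
      · exact (pow_dvd_pow π (by omega)).mul_right _
    rw [Fintype.sum_eq_add_sum_compl i, add_eq_zero_iff_eq_neg] at hy
    have h_term : π ^ (i : ℕ) * π ∣ π ^ (i : ℕ) * y i ^ d := by
      rw [← pow_succ, hy]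
      exact h_rest.neg_right
    exact hπ.dvd_of_dvd_pow ((mul_dvd_mul_iff_left (pow_ne_zero _ hπ.ne_zero)).mp h_term)

theorem eq_zero_of_sum_pow_mul_pow_eq_zero {R : Type*} [CommRing R] [IsDomain R]
    [IsNoetherianRing R] {π : R} (hπ : Prime π) {d : ℕ} {y : Fin d → R}
    (hy : ∑ i : Fin d, π ^ (i : ℕ) * y i ^ d = 0) : y = 0 := by
  have h_pow : ∀ (n : ℕ) (y : Fin d → R), ∑ i : Fin d, π ^ (i : ℕ) * y i ^ d = 0 →
      ∀ i, π ^ n ∣ y i := by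
    intro n
    induction n with
    | zero => simp
    | succ n ih =>
      intro y hy i
      choose z hz using dvd_of_sum_pow_mul_pow_eq_zero hπ hy
      have hz0 : π ^ d * ∑ j : Fin d, π ^ (j : ℕ) * z j ^ d = 0 := by
        rw [← hy, Finset.mul_sum]
        exact Finset.sum_congr rfl fun j _ => by rw [hz j]; ring
      rw [hz i, pow_succ']
      exact mul_dvd_mul_left _
        (ih z ((mul_eq_zero.mp hz0).resolve_left (pow_ne_zero _ hπ.ne_zero)) i)
  funext i
  have hmem : y i ∈ ⨅ n : ℕ, Ideal.span {π} ^ n := Ideal.mem_iInf.mpr fun n => by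
    rw [Ideal.span_singleton_pow, Ideal.mem_span_singleton]
    exact h_pow n y hy i
  rwa [Ideal.iInf_pow_eq_bot_of_isDomain _
    (Ideal.span_singleton_ne_top hπ.not_isUnit), Ideal.mem_bot] at hmem

theorem exists_ne_zero_algebraMap_eq_mul {R K ι : Type*} [CommRing R] [Nontrivial R]
    [CommRing K] [Algebra R K] [IsFractionRing R K] [Finite ι] (a : ι → K) :
    ∃ b : R, b ≠ 0 ∧ ∃ y : ι → R, ∀ i, algebraMap R K (y i) = algebraMap R K b * a i := by
  obtain ⟨b, hb⟩ := IsLocalization.exist_integer_multiples_of_finite (nonZeroDivisors R) a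
  choose y hy using hb
  exact ⟨b, nonZeroDivisors.coe_ne_zero b, y, fun i => by rw [hy i, Algebra.smul_def]⟩

theorem exists_ne_zero_sum_mul_pow_eq_zero_of_lt_card {R K : Type*} [CommRing R] [IsDomain R]
    [IsDiscreteValuationRing R] [HenselianRing R (maximalIdeal R)]
    [IsAlgClosed (ResidueField R)] [Field K] [Algebra R K] [IsFractionRing R K] {d : ℕ}
    (hd : (d : ResidueField R) ≠ 0) {ι : Type*} [Fintype ι] (hcard : d < Fintype.card ι)
    {a : ι → K} (ha : ∀ i, a i ≠ 0) : ∃ x : ι → K, x ≠ 0 ∧ ∑ i, a i * x i ^ d = 0 := by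
  classical
  obtain ⟨b, hb, y, hy⟩ := exists_ne_zero_algebraMap_eq_mul (R := R) a
  have hbK : algebraMap R K b ≠ 0 := (map_ne_zero_iff _ (IsFractionRing.injective R K)).mpr hb
  obtain ⟨i, j, hij, z, hz⟩ := exists_mul_pow_add_eq_zero_of_lt_card hd hcard (y := y)
    fun i h => mul_ne_zero hbK (ha i) (by rw [← hy i, h, map_zero])
  have hd0 : d ≠ 0 := by rintro rfl; simp at hd
  refine exists_ne_zero_sum_mul_pow_eq_zero_of_mul_pow_add_eq_zero hd0 hij (z := algebraMap R K z) ?_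
  have hzK := congrArg (algebraMap R K) hz
  rw [map_add, map_mul, map_pow, hy, hy, map_zero] at hzK
  exact (mul_eq_zero.mp (by linear_combination hzK)).resolve_left hbK

theorem eq_zero_of_sum_algebraMap_pow_mul_pow_eq_zero {R K : Type*} [CommRing R] [IsDomain R]
    [IsNoetherianRing R] [Field K] [Algebra R K] [IsFractionRing R K] {π : R} (hπ : Prime π)
    {d : ℕ} {x : Fin d → K} (hx : ∑ i : Fin d, algebraMap R K (π ^ (i : ℕ)) * x i ^ d = 0) :
    x = 0 := by
  obtain ⟨b, hb, y, hy⟩ := exists_ne_zero_algebraMap_eq_mul (R := R) x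
  have hbK : algebraMap R K b ≠ 0 := (map_ne_zero_iff _ (IsFractionRing.injective R K)).mpr hb
  have hy0 : y = 0 := by
    refine eq_zero_of_sum_pow_mul_pow_eq_zero hπ (IsFractionRing.injective R K ?_)
    calc algebraMap R K (∑ i : Fin d, π ^ (i : ℕ) * y i ^ d)
        = algebraMap R K b ^ d * ∑ i : Fin d, algebraMap R K (π ^ (i : ℕ)) * x i ^ d := by
          simp only [map_sum, map_mul, map_pow, hy, Finset.mul_sum]
          exact Finset.sum_congr rfl fun i _ => by ring
      _ = algebraMap R K 0 := by rw [hx, mul_zero, map_zero]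
  funext i
  simpa [hy0, hbK] using (hy i).symm

theorem stmt_17_general (R : Type*) [CommRing R] [IsDomain R] [IsDiscreteValuationRing R]
    [IsAdicComplete (IsLocalRing.maximalIdeal R) R]
    [IsAlgClosed (IsLocalRing.ResidueField R)]
    (d : ℕ)
    (hchar : ∀ p : ℕ, CharP (IsLocalRing.ResidueField R) p → ¬p ∣ d) :
    (∀ m : ℕ, d < m → ∀ a : Fin m → FractionRing R, (∀ i, a i ≠ 0) →
        ∃ x : Fin m → FractionRing R, x ≠ 0 ∧ ∑ i, a i * x i ^ d = 0) ∧
      ∀ π : R, Irreducible π →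
        ∀ x : Fin d → FractionRing R,
          ∑ i : Fin d, algebraMap R (FractionRing R) (π ^ (i : ℕ)) * x i ^ d = 0 → x = 0 := by
  have hd : (d : ResidueField R) ≠ 0 := fun h => hchar _ (ringChar.charP _) (ringChar.dvd h)
  exact ⟨fun m hm a ha => exists_ne_zero_sum_mul_pow_eq_zero_of_lt_card hd (by simpa using hm) ha,
    fun π hπ x hx => eq_zero_of_sum_algebraMap_pow_mul_pow_eq_zero hπ.prime hx⟩

theorem stmt_17 (R : Type*) [CommRing R] [IsDomain R] [IsDiscreteValuationRing R]
    [IsAdicComplete (IsLocalRing.maximalIdeal R) R]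
    [IsAlgClosed (IsLocalRing.ResidueField R)]
    (d : ℕ) (hd : 0 < d)
    (hchar : ∀ p : ℕ, CharP (IsLocalRing.ResidueField R) p → ¬p ∣ d) :
    (∀ m : ℕ, d < m → ∀ a : Fin m → FractionRing R, (∀ i, a i ≠ 0) →
        ∃ x : Fin m → FractionRing R, x ≠ 0 ∧ ∑ i, a i * x i ^ d = 0) ∧
      ∀ π : R, Irreducible π →
        ∀ x : Fin d → FractionRing R,
          ∑ i : Fin d, algebraMap R (FractionRing R) (π ^ (i : ℕ)) * x i ^ d = 0 → x = 0 :=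
  stmt_17_general R d hchar
end

section
/- Let d ≥ 1 and let p be a prime not dividing d such that gcd(d, p-1) = 1. Then u_diag(d, ℚ_p) = d: every diagonal form of degree d over ℚ_p in more than d variables is isotropic, and the form ⟨1, p, p², ..., p^{d-1}⟩ of degree d and dimension d is anisotropic over ℚ_p. -/
/-!
Since `gcd(d, p - 1) = 1`, raising to the `d`-th power is a bijection of `𝔽_p`, and Hensel's
lemma (applicable as `p ∤ d`) lifts this to: every unit of `ℤ_p` is a `d`-th power. Hence every
nonzero `x ∈ ℚ_p` is `p^r c^d` with `0 ≤ r < d`. Among more than `d` coefficients two share the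
same `r`, and as `d` is odd this yields an isotropic vector supported on those two coordinates.
Conversely, the terms `p^i x_i^d` with `x_i ≠ 0` have valuations `i + d v(x_i)`, pairwise distinct
mod `d`, so by the ultrametric inequality their sum cannot vanish.
-/

open Finset Polynomial

theorem FiniteField.exists_pow_eq_of_coprime {K : Type*} [Field K] [Fintype K] {d : ℕ}
    (hd : d ≠ 0) (hcop : d.Coprime (Fintype.card K - 1)) (u : K) : ∃ b : K, b ^ d = u := by
  classical
  rcases eq_or_ne u 0 with rfl | hu
  · exact ⟨0, zero_pow hd⟩
  have hcard : (Nat.card Kˣ).Coprime d := by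
    rwa [Nat.card_eq_fintype_card, Fintype.card_units, Nat.coprime_comm]
  obtain ⟨w, hw⟩ := hcard.pow_left_bijective.surjective hu.isUnit.unit
  exact ⟨w, by simpa using congrArg Units.val hw⟩

theorem Nat.Prime.odd_of_coprime_sub_one {p d : ℕ} (hp : p.Prime) (hpd : ¬p ∣ d)
    (hcop : d.Coprime (p - 1)) : Odd d := by
  rw [← Nat.not_even_iff_odd, even_iff_two_dvd]
  intro h2
  rcases hp.eq_two_or_odd' with rfl | hodd
  · exact hpd h2
  · have : 2 ∣ p - 1 := (Nat.Odd.sub_odd hodd odd_one).two_dvd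
    exact absurd (Nat.dvd_gcd h2 this) (by rw [hcop]; norm_num)

theorem exists_ne_zero_sum_mul_pow_eq_zero_of_mul_pow_eq {R ι : Type*} [CommRing R]
    [Fintype ι] [DecidableEq ι] {d : ℕ} (hd : Odd d) (a : ι → R) {i j : ι} (hij : i ≠ j)
    {s t : R} (ht : t ≠ 0) (h : a i * s ^ d = a j * t ^ d) :
    ∃ x : ι → R, x ≠ 0 ∧ ∑ k, a k * x k ^ d = 0 := by
  refine ⟨Pi.single i s - Pi.single j t, fun hx => ht ?_, ?_⟩
  · simpa [hij.symm] using congrFun hx j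
  · rw [Fintype.sum_eq_add i j hij (fun k hk => by simp [hk.1, hk.2, hd.pos.ne'])]
    simp [hij, hij.symm, hd.neg_pow, h]

namespace PadicInt

variable {p : ℕ} [Fact p.Prime]

theorem norm_lt_one_iff_toZMod_eq_zero {x : ℤ_[p]} : ‖x‖ < 1 ↔ toZMod x = 0 := by
  rw [← not_isUnit_iff, ← mem_nonunits_iff, ← IsLocalRing.mem_maximalIdeal, ← ker_toZMod,
    RingHom.mem_ker]

theorem exists_pow_eq_of_norm_sub_lt_one {d : ℕ} (hpd : ¬p ∣ d) {a u : ℤ_[p]} (ha : ‖a‖ = 1)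
    (h : ‖a ^ d - u‖ < 1) : ∃ z : ℤ_[p], z ^ d = u := by
  have hderiv : ‖(X ^ d - C u).derivative.aeval a‖ = 1 := by
    simpa [derivative_X_pow, ha] using (Nat.Prime.coprime_iff_not_dvd Fact.out).mpr hpd
  have hnorm : ‖(X ^ d - C u).aeval a‖ < ‖(X ^ d - C u).derivative.aeval a‖ ^ 2 := by
    rw [hderiv]; simpa using h
  obtain ⟨z, hz, -⟩ := hensels_lemma hnorm
  exact ⟨z, by simpa [sub_eq_zero] using hz⟩

theorem exists_pow_eq_of_isUnit {d : ℕ} (hpd : ¬p ∣ d) (hcop : d.Coprime (p - 1))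
    {u : ℤ_[p]} (hu : IsUnit u) : ∃ z : ℤ_[p], z ^ d = u := by
  have hd : d ≠ 0 := by rintro rfl; exact hpd (dvd_zero p)
  obtain ⟨b, hb⟩ := FiniteField.exists_pow_eq_of_coprime hd (by rwa [ZMod.card]) (toZMod u)
  have hab : toZMod (b.val : ℤ_[p]) = b := by simp
  refine exists_pow_eq_of_norm_sub_lt_one hpd (a := b.val) ?_ ?_
  · refine (norm_le_one _).eq_or_lt.resolve_right fun hlt => ?_
    rw [norm_lt_one_iff_toZMod_eq_zero, hab] at hlt
    rw [hlt, zero_pow hd, eq_comm, ← norm_lt_one_iff_toZMod_eq_zero, ← not_isUnit_iff] at hb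
    exact hb hu
  · rw [norm_lt_one_iff_toZMod_eq_zero]
    simp [hb]

end PadicInt

namespace Padic

variable {p : ℕ} [Fact p.Prime]

theorem norm_prime_pow_mul_pow {i d : ℕ} {y : ℚ_[p]} (hy : y ≠ 0) :
    ‖(p : ℚ_[p]) ^ i * y ^ d‖ = (p : ℝ) ^ (-((i : ℤ) + d * y.valuation)) := by
  have hp : (p : ℝ) ≠ 0 := mod_cast (Fact.out : p.Prime).ne_zero
  rw [norm_mul, norm_p_pow, norm_pow, norm_eq_zpow_neg_valuation hy, ← zpow_natCast _ d,
    ← zpow_mul, ← zpow_add₀ hp]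
  ring_nf

theorem eq_zero_of_sum_prime_pow_mul_pow_eq_zero {d : ℕ} {x : Fin d → ℚ_[p]}
    (h : ∑ i : Fin d, (p : ℚ_[p]) ^ (i : ℕ) * x i ^ d = 0) : x = 0 := by
  classical
  by_contra hx
  set f : Fin d → ℚ_[p] := fun i => (p : ℚ_[p]) ^ (i : ℕ) * x i ^ d
  set S := univ.filter (fun i => x i ≠ 0)
  obtain ⟨i₀, hi₀⟩ : S.Nonempty := by
    obtain ⟨i, hi⟩ := Function.ne_iff.mp hx
    exact ⟨i, by simpa [S] using hi⟩
  have hsum : ∑ i ∈ S, f i = 0 := by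
    rw [← h, sum_filter_of_ne]
    intro i _ hfi hxi
    simp [f, hxi, zero_pow (Fin.pos i).ne'] at hfi
  have hp : (p : ℚ_[p]) ≠ 0 := mod_cast (Fact.out : p.Prime).ne_zero
  have hpR : (1 : ℝ) < p := mod_cast (Fact.out : p.Prime).one_lt
  have hdistinct : Set.Pairwise S (fun i j => ‖f i‖ ≠ ‖f j‖) := by
    intro i hi j hj hij heq
    simp only [S, coe_filter, mem_univ, true_and, Set.mem_ofPred_eq, f] at hi hj heq
    rw [norm_prime_pow_mul_pow hi, norm_prime_pow_mul_pow hj] at heq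
    have hexp := neg_inj.mp (zpow_right_injective₀ (by positivity) hpR.ne' heq)
    have hdvd : (d : ℤ) ∣ (i : ℤ) - j := ⟨(x j).valuation - (x i).valuation, by linarith⟩
    have := Int.eq_zero_of_abs_lt_dvd hdvd (by rw [abs_lt]; omega)
    exact hij (Fin.ext (by omega))
  have hnorm := IsUltrametricDist.norm_sum_eq_sup'_of_pairwise_ne ⟨i₀, hi₀⟩ hdistinct
  rw [hsum, norm_zero] at hnorm
  have hpos : 0 < ‖f i₀‖ := by
    simp only [S, mem_filter, mem_univ, true_and] at hi₀
    exact norm_pos_iff.mpr (mul_ne_zero (pow_ne_zero _ hp) (pow_ne_zero _ hi₀))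
  exact hpos.not_ge (hnorm ▸ le_sup' (fun i => ‖f i‖) hi₀)

theorem exists_eq_prime_pow_mul_pow {d : ℕ} (hpd : ¬p ∣ d) (hcop : d.Coprime (p - 1))
    {x : ℚ_[p]} (hx : x ≠ 0) :
    ∃ (r : Fin d) (c : ℚ_[p]), c ≠ 0 ∧ x = (p : ℚ_[p]) ^ (r : ℕ) * c ^ d := by
  have hd : (0 : ℤ) < d := mod_cast Nat.pos_of_ne_zero (by rintro rfl; exact hpd (dvd_zero p))
  have hp : (p : ℚ_[p]) ≠ 0 := mod_cast (Fact.out : p.Prime).ne_zero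
  set v := x.valuation
  have hu : ‖x * (p : ℚ_[p]) ^ (-v)‖ = 1 := by
    rw [norm_mul, norm_p_zpow, norm_eq_zpow_neg_valuation hx, neg_neg,
      ← zpow_add₀ (by exact_mod_cast (Fact.out : p.Prime).ne_zero), neg_add_cancel, zpow_zero]
  obtain ⟨z, hz⟩ := PadicInt.exists_pow_eq_of_isUnit hpd hcop (u := ⟨_, hu.le⟩)
    (PadicInt.isUnit_iff.mpr hu)
  have hz' : (z : ℚ_[p]) ^ d = x * p ^ (-v) := congrArg Subtype.val hz
  have hr : 0 ≤ v % d := Int.emod_nonneg v hd.ne'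
  have hr' : v % d < d := Int.emod_lt_of_pos v hd
  have hxc : x = (p : ℚ_[p]) ^ (v % d).toNat * (p ^ (v / d) * z) ^ d := by
    rw [mul_pow, hz', ← zpow_natCast, Int.toNat_of_nonneg hr, ← zpow_natCast, ← zpow_mul,
      ← mul_assoc, ← zpow_add₀ hp, Int.emod_add_ediv_mul, mul_left_comm, ← zpow_add₀ hp,
      add_neg_cancel, zpow_zero, mul_one]
  refine ⟨⟨(v % d).toNat, by omega⟩, p ^ (v / d) * z, ?_, hxc⟩
  intro hc
  rw [hc, zero_pow (by omega), mul_zero] at hxc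
  exact hx hxc

end Padic

theorem stmt_18_general (p : ℕ) [Fact p.Prime] (d : ℕ) (hpd : ¬p ∣ d)
    (hg : Nat.gcd d (p - 1) = 1) :
    (∀ n : ℕ, d < n → ∀ a : Fin n → ℚ_[p], (∀ i, a i ≠ 0) →
        ∃ x : Fin n → ℚ_[p], x ≠ 0 ∧ ∑ i, a i * x i ^ d = 0) ∧
      ∀ x : Fin d → ℚ_[p], ∑ i : Fin d, (p : ℚ_[p]) ^ (i : ℕ) * x i ^ d = 0 → x = 0 := by
  classical
  refine ⟨fun n hn a ha => ?_, fun x hx => Padic.eq_zero_of_sum_prime_pow_mul_pow_eq_zero hx⟩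
  choose r c hc hac using fun i => Padic.exists_eq_prime_pow_mul_pow hpd hg (ha i)
  obtain ⟨i, j, hij, hr⟩ := Fintype.exists_ne_map_eq_of_card_lt r (by simpa using hn)
  refine exists_ne_zero_sum_mul_pow_eq_zero_of_mul_pow_eq
    ((Fact.out : p.Prime).odd_of_coprime_sub_one hpd hg) a hij (s := c j) (hc i) ?_
  rw [hac i, hac j, hr]
  ring

theorem stmt_18 (p : ℕ) [Fact p.Prime] (d : ℕ) (hd : 1 ≤ d) (hpd : ¬p ∣ d)
    (hg : Nat.gcd d (p - 1) = 1) :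
    (∀ n : ℕ, d < n → ∀ a : Fin n → ℚ_[p], (∀ i, a i ≠ 0) →
        ∃ x : Fin n → ℚ_[p], x ≠ 0 ∧ ∑ i, a i * x i ^ d = 0) ∧
      ∀ x : Fin d → ℚ_[p], ∑ i : Fin d, (p : ℚ_[p]) ^ (i : ℕ) * x i ^ d = 0 → x = 0 :=
  stmt_18_general p d hpd hg
end
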